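/- Fix n ≥ 1, points c₁, …, c_M ∈ ℝⁿ, and radii r₁, …, r_M ∈ (0,1) such that |c_i − c_j| ≥ r_i for all i ≠ j. Define the affine maps T_i : ℝⁿ → ℝⁿ, x ↦ (x − c_i)/r_i, let ρ be Step-ReLU on ℝⁿ, and recursively define G_i : ℝⁿ → ℝⁿ by G₀ = id and G_i = T_i^{−1} ∘ ρ ∘ T_i ∘ G_{i−1}. Then for all i = 0, 1, …, M and all x ∈ ℝⁿ: G_i(x) = x if x ∉ ⋃_{j=1}^{i} B_{r_j}(c_j), and G_i(x) = c_j where j ≤ i is the smallest index with x ∈ B_{r_j}(c_j). -/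

import Mathlib

open scoped Classical
open Metric Set

noncomputable section

abbrev Euc (n : ℕ) := EuclideanSpace ℝ (Fin n)

/-- The standard inclusion ℝᵏ ↪ ℝˡ into the first k coordinates. -/
def incl (k l : ℕ) (v : Euc k) : Euc l :=
  WithLp.toLp 2 (fun j => if h : (j : ℕ) < k then v ⟨j, h⟩ else 0)

/-- Step-ReLU on ℝⁿ: v ↦ v if ‖v‖ ≥ 1, and v ↦ 0 if ‖v‖ < 1. -/
def stepReLU {n : ℕ} (v : Euc n) : Euc n := if 1 ≤ ‖v‖ then v else 0

/-- The recursively defined maps Gᵢ : ℝⁿ → ℝⁿ: G₀ = id and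
G_{i+1} = Tᵢ⁻¹ ∘ ρ ∘ Tᵢ ∘ Gᵢ, where Tᵢ(x) = (x − cᵢ)/rᵢ, Tᵢ⁻¹(x) = rᵢ x + cᵢ,
and ρ is Step-ReLU.  (Indices start at 0.) -/
def GmapFixed {n : ℕ} (c : ℕ → Euc n) (r : ℕ → ℝ) : ℕ → Euc n → Euc n
  | 0 => fun x => x
  | (i+1) => fun x =>
      r i • stepReLU ((r i)⁻¹ • (GmapFixed c r i x - c i)) + c i

lemma smul_stepReLU_smul_inv_sub_add {n : ℕ} {r : ℝ} (hr : 0 < r) (c y : Euc n) :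
    r • stepReLU (r⁻¹ • (y - c)) + c = if r ≤ dist y c then y else c := by
  have hnorm : 1 ≤ ‖r⁻¹ • (y - c)‖ ↔ r ≤ dist y c := by
    rw [norm_smul, norm_inv, Real.norm_of_nonneg hr.le, le_inv_mul_iff₀ hr, mul_one, dist_eq_norm]
  unfold stepReLU
  split_ifs with h₁ h₂ h₂
  · rw [smul_smul, mul_inv_cancel₀ hr.ne', one_smul, sub_add_cancel]
  · exact absurd (hnorm.mp h₁) h₂
  · exact absurd (hnorm.mpr h₂) h₁
  · rw [smul_zero, zero_add]

lemma GmapFixed_succ {n : ℕ} (c : ℕ → Euc n) {r : ℕ → ℝ} {i : ℕ} (hr : 0 < r i) (x : Euc n) :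
    GmapFixed c r (i + 1) x =
      if r i ≤ dist (GmapFixed c r i x) (c i) then GmapFixed c r i x else c i :=
  smul_stepReLU_smul_inv_sub_add hr _ _

lemma GmapFixed_eq_self {n : ℕ} (c : ℕ → Euc n) {r : ℕ → ℝ} {i : ℕ} (hr : ∀ j < i, 0 < r j)
    {x : Euc n} (hx : ∀ j < i, x ∉ ball (c j) (r j)) : GmapFixed c r i x = x := by
  induction i with
  | zero => rfl
  | succ i ih =>
    rw [GmapFixed_succ c (hr i i.lt_succ_self), ih (fun j hj => hr j (hj.trans i.lt_succ_self))
      (fun j hj => hx j (hj.trans i.lt_succ_self)), if_pos]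
    simpa [mem_ball] using hx i i.lt_succ_self

/-- Once `x` has been sent to `c j`, the later steps fix it: by separation `c j` lies outside
the later balls. -/
lemma GmapFixed_eq_center {n : ℕ} (c : ℕ → Euc n) {r : ℕ → ℝ} {i j : ℕ} (hji : j < i)
    (hr : ∀ k < i, 0 < r k) (hsep : ∀ k < i, j < k → r k ≤ dist (c k) (c j)) {x : Euc n}
    (hxj : x ∈ ball (c j) (r j)) (hx : ∀ k < j, x ∉ ball (c k) (r k)) :
    GmapFixed c r i x = c j := by
  induction i, hji using Nat.le_induction with
  | base =>
    rw [GmapFixed_succ c (hr j j.lt_succ_self),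
      GmapFixed_eq_self c (fun k hk => hr k (hk.trans j.lt_succ_self)) hx, if_neg]
    exact not_le.mpr (mem_ball.mp hxj)
  | succ i hji ih =>
    rw [GmapFixed_succ c (hr i i.lt_succ_self),
      ih (fun k hk => hr k (hk.trans i.lt_succ_self))
        (fun k hk => hsep k (hk.trans i.lt_succ_self)), if_pos]
    exact dist_comm (c i) (c j) ▸ hsep i i.lt_succ_self hji

theorem GmapFixed_eq_general {n : ℕ} (M : ℕ)
    (c : ℕ → Euc n) (r : ℕ → ℝ) (hr : ∀ j < M, r j ∈ Set.Ioo (0:ℝ) 1)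
    (hsep : ∀ i < M, ∀ j < M, i ≠ j → r i ≤ dist (c i) (c j)) :
    ∀ i ≤ M, ∀ x : Euc n,
      ((∀ j < i, x ∉ Metric.ball (c j) (r j)) → GmapFixed c r i x = x) ∧
      (∀ j < i, x ∈ Metric.ball (c j) (r j) → (∀ k < j, x ∉ Metric.ball (c k) (r k)) →
        GmapFixed c r i x = c j) := by
  intro i hi x
  have hr' : ∀ k < i, 0 < r k := fun k hk => (hr k (hk.trans_le hi)).1
  refine ⟨GmapFixed_eq_self c hr', fun j hji hxj hx => GmapFixed_eq_center c hji hr' ?_ hxj hx⟩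
  exact fun k hki hjk => hsep k (hki.trans_le hi) j (hji.trans_le hi) hjk.ne'

/-- Assume ‖cᵢ − cⱼ‖ ≥ rᵢ for i ≠ j.  Then for all i ≤ M and
x ∈ ℝⁿ: if x lies in none of the balls B_{rⱼ}(cⱼ) with j < i then Gᵢ(x) = x; and if
j < i is the smallest index with x ∈ B_{rⱼ}(cⱼ) then Gᵢ(x) = cⱼ. -/
theorem GmapFixed_eq {n : ℕ} (hn : 1 ≤ n) (M : ℕ)
    (c : ℕ → Euc n) (r : ℕ → ℝ) (hr : ∀ j < M, r j ∈ Set.Ioo (0:ℝ) 1)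
    (hsep : ∀ i < M, ∀ j < M, i ≠ j → r i ≤ dist (c i) (c j)) :
    ∀ i ≤ M, ∀ x : Euc n,
      ((∀ j < i, x ∉ Metric.ball (c j) (r j)) → GmapFixed c r i x = x) ∧
      (∀ j < i, x ∈ Metric.ball (c j) (r j) → (∀ k < j, x ∉ Metric.ball (c k) (r k)) →
        GmapFixed c r i x = c j) :=
  GmapFixed_eq_general M c r hr hsep

end
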